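/- Let r ≥ 2 and let s be an even positive integer, and let W be any set of s/2 positive integers. Then there exists an infinite set A of positive integers generating the additive group ℤ such that S_A(r) = W ∪ (−W); in particular (ℤ, A) has phase transition (r, s). -/

import Mathlib

noncomputable def addWordLength {G : Type*} [AddGroup G] (A : Set G) (x : G) : ℕ :=
  sInf {n : ℕ | ∃ l : List G, l.length = n ∧ (∀ g ∈ l, g ∈ A ∪ (-A)) ∧ l.sum = x}

open Finset

/-!
Take `Q ≥ B + r²` with `B ≥ max W`, and let `A` consist of the powers `Q ^ j` (`j ≥ 2`) together
with `special r Q j = c_j Q ^ j + ⌊j/2⌋` for every scale `j ≥ 2` such that `⌊j/2⌋ ∈ W` exactly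
when `j` is even; here `c_j = lead r j` is `r - 1` for even and `r - 2` for odd `j`. Subtracting
`c_j` copies of `Q ^ j` shows that each `w ∈ W` has length at most `r` (take `j = 2w`) and every
other positive integer `x` has length at most `r - 1` (take `j = 2x + 1`).

Conversely, grouping the letters of a word of length `< r` by scale writes its sum as
`∑ j, ((b_j + a_j c_j) Q ^ j + a_j ⌊j/2⌋)` with `∑ j, (|a_j| + |b_j|) < r`. If the sum is at most
`B` in absolute value, then at the top scale `J` all lower terms together are smaller than
`Q ^ J`, which forces `b_J + a_J c_J = 0`. As `|a_J| + |b_J| < r`, the top scale then vanishes,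
unless `J` is odd, `|a_J| = 1` and there are no other letters, in which case the sum is
`±⌊J/2⌋ ∉ W`. Descending through the scales, no short word sums to an element of `W ∪ -W`.
-/

section WordLength

variable {G : Type*} [AddGroup G] {A : Set G}

lemma addWordLength_le_length {l : List G} (hl : ∀ g ∈ l, g ∈ A ∪ -A) :
    addWordLength A l.sum ≤ l.length :=
  Nat.sInf_le ⟨l, rfl, hl, rfl⟩

lemma le_addWordLength {x : G} {n : ℕ}
    (hx : ∃ l : List G, (∀ g ∈ l, g ∈ A ∪ -A) ∧ l.sum = x)
    (h : ∀ l : List G, (∀ g ∈ l, g ∈ A ∪ -A) → l.sum = x → n ≤ l.length) :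
    n ≤ addWordLength A x := by
  obtain ⟨l, hl, rfl⟩ := hx
  refine le_csInf ⟨_, l, rfl, hl, rfl⟩ ?_
  rintro m ⟨l', rfl, hl', hsum⟩
  exact h l' hl' hsum

lemma addWordLength_zero : addWordLength A 0 = 0 :=
  Nat.le_zero.1 (addWordLength_le_length (l := []) (by simp))

lemma addWordLength_neg (x : G) : addWordLength A (-x) = addWordLength A x := by
  suffices h : ∀ (y : G) (l : List G), (∀ g ∈ l, g ∈ A ∪ -A) → l.sum = y →
      ∃ l' : List G, l'.length = l.length ∧ (∀ g ∈ l', g ∈ A ∪ -A) ∧ l'.sum = -y by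
    unfold addWordLength
    congr 1
    ext n
    constructor
    · rintro ⟨l, rfl, hl, hsum⟩
      simpa using h _ l hl hsum
    · rintro ⟨l, rfl, hl, hsum⟩
      exact h x l hl hsum
  rintro y l hl rfl
  refine ⟨(l.map Neg.neg).reverse, by simp, ?_, (List.sum_neg_reverse l).symm⟩
  simp only [List.mem_reverse, List.mem_map, forall_exists_index, and_imp]
  rintro _ g hg rfl
  simpa only [Set.mem_union, Set.mem_neg, neg_neg, or_comm] using hl g hg

lemma list_sum_mem_closure {l : List G} (hl : ∀ g ∈ l, g ∈ A ∪ -A) :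
    l.sum ∈ AddSubgroup.closure A := by
  refine AddSubgroup.list_sum_mem _ fun g hg => ?_
  rcases hl g hg with h | h
  · exact AddSubgroup.subset_closure h
  · simpa using AddSubgroup.neg_mem _ (AddSubgroup.subset_closure h)

end WordLength

lemma eq_zero_of_abs_mul_add_le {μ P R B K : ℤ} (h : |μ * P + R| ≤ B) (hR : |R| ≤ K)
    (hP : B + K < P) : μ = 0 := by
  by_contra hμ
  have h1 : 1 ≤ |μ| := Int.one_le_abs hμ
  have hP0 : 0 < P := by linarith [abs_nonneg (μ * P + R), abs_nonneg R]
  have : |μ| * |P| ≤ |R| + |μ * P + R| := by simpa using abs_sub_le (μ * P) (μ * P + R) 0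
  rw [abs_of_pos hP0] at this
  nlinarith

lemma addWordLength_abs (A : Set ℤ) (x : ℤ) : addWordLength A |x| = addWordLength A x := by
  rcases abs_choice x with h | h <;> rw [h]
  exact addWordLength_neg x

lemma mem_union_neg_iff_abs_mem {W : Set ℤ} (hW : W ⊆ {n : ℤ | 0 < n}) {x : ℤ} :
    x ∈ W ∪ -W ↔ |x| ∈ W := by
  have hpos : ∀ y ∈ W, 0 < y := fun y hy => hW hy
  rcases le_total 0 x with hx | hx
  · rw [abs_of_nonneg hx, Set.mem_union, Set.mem_neg, or_iff_left_iff_imp]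
    intro h
    have := hpos _ h
    omega
  · rw [abs_of_nonpos hx, Set.mem_union, Set.mem_neg, or_iff_right_iff_imp]
    intro h
    have := hpos _ h
    omega

lemma exists_sign_of_mem_union_neg {S : Set ℤ} {x : ℤ} (hx : x ∈ S ∪ -S) :
    ∃ ε : ℤ, |ε| = 1 ∧ ∃ y ∈ S, x = ε * y := by
  rcases hx with hx | hx
  · exact ⟨1, by simp, x, hx, by ring⟩
  · exact ⟨-1, by simp, -x, hx, by ring⟩

lemma sum_abs_single_le (k N : ℕ) (α : ℤ) : ∑ j ∈ range N, |(Pi.single k α : ℕ → ℤ) j| ≤ |α| := by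
  simp only [Pi.apply_single (fun _ => abs) (fun _ => abs_zero), sum_pi_single', mem_range]
  split_ifs <;> simp

lemma ne_zero_or_of_add_single_ne_zero {f : ℕ → ℤ} {k j : ℕ} {α : ℤ}
    (h : (f + Pi.single k α : ℕ → ℤ) j ≠ 0) : f j ≠ 0 ∨ (j = k ∧ α ≠ 0) := by
  rcases eq_or_ne j k with rfl | hjk
  · by_contra! hc
    simp_all
  · exact Or.inl (by simpa [Pi.single_apply, hjk] using h)

namespace PhaseTransition

def lead (r j : ℕ) : ℕ := if Even j then r - 1 else r - 2

def special (r : ℕ) (Q : ℤ) (j : ℕ) : ℤ := lead r j * Q ^ j + (j / 2 : ℕ)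

def IsSpecialScale (W : Set ℤ) (j : ℕ) : Prop := 2 ≤ j ∧ (((j / 2 : ℕ) : ℤ) ∈ W ↔ Even j)

def genSet (W : Set ℤ) (r : ℕ) (Q : ℤ) : Set ℤ :=
  (Q ^ ·) '' Set.Ici 2 ∪ special r Q '' {j | IsSpecialScale W j}

/-- `a j` and `b j` are the net multiplicities of `special r Q j` and of `Q ^ j` in a word. -/
def coeffSum (r : ℕ) (Q : ℤ) (a b : ℕ → ℤ) (N : ℕ) : ℤ :=
  ∑ j ∈ range N, (b j * Q ^ j + a j * special r Q j)

def coeffWeight (a b : ℕ → ℤ) (N : ℕ) : ℤ := ∑ j ∈ range N, (|a j| + |b j|)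

variable {W : Set ℤ} {r : ℕ} {B Q : ℤ}

lemma lead_le (hr : 2 ≤ r) (j : ℕ) : (lead r j : ℤ) ≤ r - 1 := by
  unfold lead; split_ifs <;> omega

lemma half_le_pow_pred (hQ : 2 ≤ Q) (j : ℕ) : ((j / 2 : ℕ) : ℤ) ≤ Q ^ (j - 1) := by
  have h2 : j / 2 ≤ 2 ^ (j - 1) := by
    have := Nat.lt_two_pow_self (n := j - 1)
    omega
  calc ((j / 2 : ℕ) : ℤ) ≤ 2 ^ (j - 1) := by exact_mod_cast h2
    _ ≤ Q ^ (j - 1) := pow_le_pow_left₀ (by norm_num) hQ _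

lemma special_nonneg (hQ : 0 ≤ Q) (j : ℕ) : 0 ≤ special r Q j := by
  unfold special; positivity

lemma special_le (hr : 2 ≤ r) (hQ : 2 ≤ Q) (j : ℕ) : special r Q j ≤ r * Q ^ j := by
  have hpow : Q ^ (j - 1) ≤ Q ^ j := pow_le_pow_right₀ (by omega) (Nat.sub_le j 1)
  have := mul_le_mul_of_nonneg_right (lead_le hr j) (by positivity : (0 : ℤ) ≤ Q ^ j)
  unfold special
  linarith [half_le_pow_pred hQ j]

lemma abs_coeffSum_term_le (hr : 2 ≤ r) (hQ : 2 ≤ Q) (a b : ℤ) (j : ℕ) :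
    |b * Q ^ j + a * special r Q j| ≤ (|a| + |b|) * r * Q ^ j := by
  have hQj : 0 ≤ Q ^ j := by positivity
  have hsp0 : 0 ≤ special r Q j := special_nonneg (by omega) j
  calc |b * Q ^ j + a * special r Q j| ≤ |b| * Q ^ j + |a| * special r Q j := by
        simpa [abs_mul, abs_of_nonneg hQj, abs_of_nonneg hsp0]
          using abs_add_le (b * Q ^ j) (a * special r Q j)
    _ ≤ (|a| + |b|) * r * Q ^ j := by
        nlinarith [mul_le_mul_of_nonneg_left (special_le hr hQ j) (abs_nonneg a),
          mul_nonneg (mul_nonneg (abs_nonneg b) (by omega : (0 : ℤ) ≤ r - 1)) hQj]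

lemma coeffWeight_nonneg (a b : ℕ → ℤ) (N : ℕ) : 0 ≤ coeffWeight a b N :=
  sum_nonneg fun _ _ => by positivity

lemma abs_coeffSum_le (hr : 2 ≤ r) (hQ : 2 ≤ Q) (a b : ℕ → ℤ) (N : ℕ) :
    |coeffSum r Q a b N| ≤ r * coeffWeight a b N * Q ^ (N - 1) := by
  calc |coeffSum r Q a b N| ≤ ∑ j ∈ range N, |b j * Q ^ j + a j * special r Q j| :=
        abs_sum_le_sum_abs _ _
    _ ≤ ∑ j ∈ range N, (|a j| + |b j|) * (r * Q ^ (N - 1)) := by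
        refine sum_le_sum fun j hj => ?_
        have hjN : j ≤ N - 1 := by rw [mem_range] at hj; omega
        calc |b j * Q ^ j + a j * special r Q j| ≤ (|a j| + |b j|) * r * Q ^ j :=
              abs_coeffSum_term_le hr hQ (a j) (b j) j
          _ ≤ (|a j| + |b j|) * r * Q ^ (N - 1) :=
              mul_le_mul_of_nonneg_left (pow_le_pow_right₀ (by omega) hjN) (by positivity)
          _ = (|a j| + |b j|) * (r * Q ^ (N - 1)) := by ring
    _ = r * coeffWeight a b N * Q ^ (N - 1) := by
        rw [← sum_mul, coeffWeight]; ring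

lemma coeffSum_succ (a b : ℕ → ℤ) (N : ℕ) :
    coeffSum r Q a b (N + 1) =
      (b N + a N * lead r N) * Q ^ N + (a N * (N / 2 : ℕ) + coeffSum r Q a b N) := by
  rw [coeffSum, sum_range_succ, ← coeffSum, special]; ring

lemma coeffWeight_succ (a b : ℕ → ℤ) (N : ℕ) :
    coeffWeight a b (N + 1) = |a N| + |b N| + coeffWeight a b N := by
  rw [coeffWeight, sum_range_succ, ← coeffWeight]; ring

lemma eq_zero_or_odd_of_add_mul_lead_eq_zero (hr : 2 ≤ r) {j : ℕ} {a b w : ℤ} (hw : 0 ≤ w)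
    (hab : b + a * lead r j = 0) (hsum : |a| + |b| + w ≤ r - 1) :
    (a = 0 ∧ b = 0) ∨ (Odd j ∧ |a| = 1 ∧ w = 0) := by
  have hb : |b| = |a| * lead r j := by
    rw [show b = -(a * lead r j) by linarith, abs_neg, abs_mul, Nat.abs_cast]
  rcases eq_or_ne a 0 with ha | ha
  · exact Or.inl ⟨ha, by simpa [ha] using hab⟩
  have h1 : 1 ≤ |a| := Int.one_le_abs ha
  unfold lead at hb
  rcases Nat.even_or_odd j with hj | hj
  · rw [if_pos hj, Nat.cast_sub (by omega)] at hb
    push_cast at hb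
    nlinarith [mul_le_mul_of_nonneg_right h1 (by omega : (0 : ℤ) ≤ r)]
  · rw [if_neg (Nat.not_even_iff_odd.2 hj), Nat.cast_sub hr] at hb
    push_cast at hb
    have h2 := mul_le_mul_of_nonneg_right h1 (by omega : (0 : ℤ) ≤ r - 1)
    right
    refine ⟨hj, ?_, ?_⟩ <;> nlinarith

lemma add_mul_pow_pred_lt_pow (hr : 0 < r) (hB : 0 ≤ B) (hQ : B + r ^ 2 ≤ Q) {N : ℕ}
    (hN : 1 ≤ N) :
    B + r * (r - 1) * Q ^ (N - 1) < Q ^ N := by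
  have hr' : (1 : ℤ) ≤ r := by omega
  have hQ1 : 1 ≤ Q ^ (N - 1) := one_le_pow₀ (by nlinarith)
  rw [show Q ^ N = Q * Q ^ (N - 1) by rw [← pow_succ']; congr 1; omega]
  nlinarith

lemma add_mul_lead_eq_zero_of_abs_coeffSum_succ_le (hr : 2 ≤ r) (hB : 0 ≤ B)
    (hQ : B + r ^ 2 ≤ Q) {a b : ℕ → ℤ} (ha0 : a 0 = 0) (hb0 : b 0 = 0) {N : ℕ}
    (hw : |a N| + |b N| + coeffWeight a b N ≤ r - 1) (hS : |coeffSum r Q a b (N + 1)| ≤ B) :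
    b N + a N * lead r N = 0 := by
  rcases Nat.eq_zero_or_pos N with rfl | hN
  · simp [ha0, hb0]
  have hQ2 : 2 ≤ Q := by nlinarith
  have hQN : 0 ≤ Q ^ (N - 1) := by positivity
  refine eq_zero_of_abs_mul_add_le (coeffSum_succ (r := r) (Q := Q) a b N ▸ hS) ?_
    (add_mul_pow_pred_lt_pow (by omega) hB hQ hN)
  calc |a N * (N / 2 : ℕ) + coeffSum r Q a b N|
      ≤ |a N| * Q ^ (N - 1) + r * coeffWeight a b N * Q ^ (N - 1) := by
        refine (abs_add_le _ _).trans (add_le_add ?_ (abs_coeffSum_le hr hQ2 a b N))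
        rw [abs_mul, Nat.abs_cast]
        exact mul_le_mul_of_nonneg_left (half_le_pow_pred hQ2 N) (abs_nonneg _)
    _ = (|a N| + r * coeffWeight a b N) * Q ^ (N - 1) := by ring
    _ ≤ r * (r - 1) * Q ^ (N - 1) := by
        refine mul_le_mul_of_nonneg_right ?_ hQN
        nlinarith [abs_nonneg (a N), abs_nonneg (b N), coeffWeight_nonneg a b N]

theorem coeffSum_eq_zero_or_abs_eq_half (hr : 2 ≤ r) (hB : 0 ≤ B) (hQ : B + r ^ 2 ≤ Q)
    {a b : ℕ → ℤ} (ha0 : a 0 = 0) (hb0 : b 0 = 0) (N : ℕ) (hw : coeffWeight a b N ≤ r - 1)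
    (hS : |coeffSum r Q a b N| ≤ B) :
    coeffSum r Q a b N = 0 ∨
      ∃ j < N, Odd j ∧ a j ≠ 0 ∧ |coeffSum r Q a b N| = ((j / 2 : ℕ) : ℤ) := by
  have hQ2 : 2 ≤ Q := by nlinarith
  induction N with
  | zero => exact Or.inl (by simp [coeffSum])
  | succ N ih =>
    rw [coeffWeight_succ] at hw
    have hw0 := coeffWeight_nonneg a b N
    have hμ := add_mul_lead_eq_zero_of_abs_coeffSum_succ_le hr hB hQ ha0 hb0 hw hS
    rcases eq_zero_or_odd_of_add_mul_lead_eq_zero hr hw0 hμ hw with ⟨haN, hbN⟩ | ⟨hodd, haN, hwN⟩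
    · have hstep : coeffSum r Q a b (N + 1) = coeffSum r Q a b N := by
        rw [coeffSum_succ, haN, hbN]; ring
      rw [hstep] at hS ⊢
      rcases ih (by linarith [abs_nonneg (a N), abs_nonneg (b N)]) hS with h | ⟨j, hj, h⟩
      · exact Or.inl h
      · exact Or.inr ⟨j, by omega, h⟩
    · have hzero : coeffSum r Q a b N = 0 :=
        abs_nonpos_iff.1 (by simpa [hwN] using abs_coeffSum_le hr hQ2 a b N)
      refine Or.inr ⟨N, by omega, hodd, fun h => by simp [h] at haN, ?_⟩
      rw [coeffSum_succ, hμ, hzero, zero_mul, zero_add, add_zero, abs_mul, haN, one_mul,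
        Nat.abs_cast]

lemma coeffSum_add_single {k N : ℕ} (hk : k < N) (a b : ℕ → ℤ) (α β : ℤ) :
    coeffSum r Q (a + Pi.single k α) (b + Pi.single k β) N =
      coeffSum r Q a b N + (β * Q ^ k + α * special r Q k) := by
  simp [coeffSum, add_mul, sum_add_distrib, Pi.single_apply, hk]
  ring

lemma coeffWeight_add_single_le (a b : ℕ → ℤ) (k N : ℕ) (α β : ℤ) :
    coeffWeight (a + Pi.single k α) (b + Pi.single k β) N ≤ coeffWeight a b N + (|α| + |β|) := by
  calc coeffWeight (a + Pi.single k α) (b + Pi.single k β) N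
      ≤ ∑ j ∈ range N, ((|a j| + |b j|) +
          (|(Pi.single k α : ℕ → ℤ) j| + |(Pi.single k β : ℕ → ℤ) j|)) :=
        sum_le_sum fun j _ => by
          simp only [Pi.add_apply]
          linarith [abs_add_le (a j) ((Pi.single k α : ℕ → ℤ) j),
            abs_add_le (b j) ((Pi.single k β : ℕ → ℤ) j)]
    _ ≤ coeffWeight a b N + (|α| + |β|) := by
        simp only [coeffWeight, sum_add_distrib]
        linarith [sum_abs_single_le k N α, sum_abs_single_le k N β]

lemma exists_coeffSum_eq_sum (l : List ℤ) (hl : ∀ x ∈ l, x ∈ genSet W r Q ∪ -genSet W r Q) :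
    ∃ a b : ℕ → ℤ, (∀ j, a j ≠ 0 → IsSpecialScale W j) ∧ (∀ j, b j ≠ 0 → 2 ≤ j) ∧
      (∀ N, coeffWeight a b N ≤ l.length) ∧ ∃ N₀, ∀ N ≥ N₀, coeffSum r Q a b N = l.sum := by
  induction l with
  | nil => exact ⟨0, 0, by simp, by simp, by simp [coeffWeight], 0, by simp [coeffSum]⟩
  | cons x l ih =>
    obtain ⟨a, b, ha, hb, hw, N₀, hS⟩ := ih fun y hy => hl y (List.mem_cons_of_mem _ hy)
    obtain ⟨ε, hε, y, hy, rfl⟩ := exists_sign_of_mem_union_neg (hl x List.mem_cons_self)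
    obtain ⟨k, α, β, hαβ, hα, hβ, hx⟩ : ∃ (k : ℕ) (α β : ℤ), |α| + |β| = 1 ∧
        (α ≠ 0 → IsSpecialScale W k) ∧ (β ≠ 0 → 2 ≤ k) ∧ ε * y = β * Q ^ k + α * special r Q k := by
      rcases hy with ⟨k, hk, rfl⟩ | ⟨k, hk, rfl⟩
      · exact ⟨k, 0, ε, by simp [hε], by simp, fun _ => hk, by simp⟩
      · exact ⟨k, ε, 0, by simp [hε], fun _ => hk, by simp, by simp⟩
    refine ⟨a + (Pi.single k α : ℕ → ℤ), b + (Pi.single k β : ℕ → ℤ),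
      fun j hj => (ne_zero_or_of_add_single_ne_zero hj).elim (ha j) fun ⟨hjk, h⟩ => hjk ▸ hα h,
      fun j hj => (ne_zero_or_of_add_single_ne_zero hj).elim (hb j) fun ⟨hjk, h⟩ => hjk ▸ hβ h,
      fun N => ?_, max N₀ (k + 1), fun N hN => ?_⟩
    · have := coeffWeight_add_single_le a b k N α β
      have := hw N
      simp only [List.length_cons, Nat.cast_add, Nat.cast_one]
      linarith
    · rw [List.sum_cons, hx, coeffSum_add_single (by omega), hS N (le_of_max_le_left hN)]
      ring

lemma genSet_subset_pos (hQ : 0 < Q) : genSet W r Q ⊆ {n : ℤ | 0 < n} := by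
  rintro _ (⟨k, -, rfl⟩ | ⟨k, hk, rfl⟩)
  · exact pow_pos hQ k
  · have : 1 ≤ k / 2 := by have := hk.1; omega
    show 0 < special r Q k
    unfold special
    positivity

lemma genSet_infinite (hQ : 2 ≤ Q) : (genSet W r Q).Infinite :=
  ((Set.Ici_infinite 2).image (pow_right_injective₀ (by omega) (by omega)).injOn).mono
    Set.subset_union_left

lemma exists_isSpecialScale {n : ℕ} (hn : 0 < n) : ∃ j, IsSpecialScale W j ∧ j / 2 = n := by
  by_cases h : (n : ℤ) ∈ W
  · exact ⟨2 * n, ⟨by omega, by simp [h]⟩, by omega⟩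
  · refine ⟨2 * n + 1, ⟨by omega, ?_⟩, by omega⟩
    simp [show (2 * n + 1) / 2 = n by omega, h]

lemma exists_word_of_isSpecialScale {j : ℕ} (hj : IsSpecialScale W j) :
    ∃ l : List ℤ, l.length = lead r j + 1 ∧ (∀ g ∈ l, g ∈ genSet W r Q ∪ -genSet W r Q) ∧
      l.sum = ((j / 2 : ℕ) : ℤ) := by
  refine ⟨special r Q j :: List.replicate (lead r j) (-Q ^ j), by simp, ?_, ?_⟩
  · simp only [List.mem_cons, List.mem_replicate]
    rintro g (rfl | ⟨-, rfl⟩)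
    · exact Or.inl (Or.inr ⟨j, hj, rfl⟩)
    · rw [Set.mem_union, Set.mem_neg, neg_neg]
      exact Or.inr (Or.inl ⟨j, hj.1, rfl⟩)
  · simp [special]

lemma abs_sum_notMem_of_length_lt (hr : 2 ≤ r) (hB : 0 ≤ B) (hQ : B + r ^ 2 ≤ Q)
    (hW : W ⊆ {n : ℤ | 0 < n}) {l : List ℤ} (hl : ∀ x ∈ l, x ∈ genSet W r Q ∪ -genSet W r Q)
    (hlen : l.length < r) (hS : |l.sum| ≤ B) : |l.sum| ∉ W := by
  obtain ⟨a, b, ha, hb, hw, N, hsum⟩ := exists_coeffSum_eq_sum l hl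
  have ha0 : a 0 = 0 := by by_contra h; have := (ha 0 h).1; omega
  have hb0 : b 0 = 0 := by by_contra h; have := hb 0 h; omega
  rw [← hsum N le_rfl] at hS ⊢
  have hwN : coeffWeight a b N ≤ r - 1 := by have := hw N; omega
  rcases coeffSum_eq_zero_or_abs_eq_half hr hB hQ ha0 hb0 N hwN hS with h | ⟨j, -, hodd, haj, heq⟩
  · rw [h, abs_zero]
    exact fun h0 => lt_irrefl (0 : ℤ) (hW h0)
  · rw [heq]
    exact fun hmem => Nat.not_even_iff_odd.2 hodd ((ha j haj).2.1 hmem)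

lemma addWordLength_natCast_of_mem (hr : 2 ≤ r) (hB : 0 ≤ B) (hQ : B + r ^ 2 ≤ Q)
    (hW : W ⊆ {n : ℤ | 0 < n}) (hWB : ∀ w ∈ W, w ≤ B) {n : ℕ} (hn : (n : ℤ) ∈ W) :
    addWordLength (genSet W r Q) n = r := by
  obtain ⟨j, hj, rfl⟩ := exists_isSpecialScale (W := W) (Int.natCast_pos.1 (hW hn))
  obtain ⟨l, hlen, hl, hsum⟩ := exists_word_of_isSpecialScale (r := r) (Q := Q) hj
  have hlen' : l.length = r := by rw [hlen, lead, if_pos (hj.2.1 hn)]; omega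
  refine le_antisymm ((hsum ▸ addWordLength_le_length hl).trans hlen'.le)
    (le_addWordLength ⟨l, hl, hsum⟩ fun l' hl' hsum' => ?_)
  have habs : |l'.sum| = ((j / 2 : ℕ) : ℤ) := by rw [hsum', Nat.abs_cast]
  by_contra! hlt
  exact abs_sum_notMem_of_length_lt hr hB hQ hW hl' hlt (habs ▸ hWB _ hn) (habs ▸ hn)

lemma addWordLength_natCast_lt_of_notMem (hr : 2 ≤ r) {n : ℕ} (hn : (n : ℤ) ∉ W) :
    addWordLength (genSet W r Q) n < r := by
  rcases Nat.eq_zero_or_pos n with rfl | hn0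
  · rw [Nat.cast_zero, addWordLength_zero]; omega
  obtain ⟨j, hj, rfl⟩ := exists_isSpecialScale (W := W) hn0
  obtain ⟨l, hlen, hl, hsum⟩ := exists_word_of_isSpecialScale (r := r) (Q := Q) hj
  have hodd : ¬ Even j := fun h => hn (hj.2.2 h)
  have hlen' : l.length < r := by rw [hlen, lead, if_neg hodd]; omega
  exact lt_of_le_of_lt (hsum ▸ addWordLength_le_length hl) hlen'

lemma addWordLength_genSet_eq_iff (hr : 2 ≤ r) (hB : 0 ≤ B) (hQ : B + r ^ 2 ≤ Q)
    (hW : W ⊆ {n : ℤ | 0 < n}) (hWB : ∀ w ∈ W, w ≤ B) (x : ℤ) :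
    addWordLength (genSet W r Q) x = r ↔ |x| ∈ W := by
  rw [← addWordLength_abs, ← Int.natCast_natAbs]
  by_cases h : (x.natAbs : ℤ) ∈ W
  · exact iff_of_true (addWordLength_natCast_of_mem hr hB hQ hW hWB h) h
  · exact iff_of_false (addWordLength_natCast_lt_of_notMem hr h).ne h

lemma addWordLength_genSet_le (hr : 2 ≤ r) (hB : 0 ≤ B) (hQ : B + r ^ 2 ≤ Q)
    (hW : W ⊆ {n : ℤ | 0 < n}) (hWB : ∀ w ∈ W, w ≤ B) (x : ℤ) :
    addWordLength (genSet W r Q) x ≤ r := by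
  rw [← addWordLength_abs, ← Int.natCast_natAbs]
  by_cases h : (x.natAbs : ℤ) ∈ W
  · exact (addWordLength_natCast_of_mem hr hB hQ hW hWB h).le
  · exact (addWordLength_natCast_lt_of_notMem hr h).le

lemma closure_genSet_eq_top : AddSubgroup.closure (genSet W r Q) = ⊤ := by
  obtain ⟨j, hj, hj1⟩ := exists_isSpecialScale (W := W) one_pos
  obtain ⟨l, -, hl, hsum⟩ := exists_word_of_isSpecialScale (r := r) (Q := Q) hj
  have h1 : (1 : ℤ) ∈ AddSubgroup.closure (genSet W r Q) := by
    simpa [hsum, hj1] using list_sum_mem_closure hl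
  rw [eq_top_iff, ← Int.zmultiples_one]
  exact AddSubgroup.zmultiples_le.2 h1

end PhaseTransition

open PhaseTransition in
theorem stmt18_general (r s : ℕ) (hr : 2 ≤ r) (hse : Even s)
    (W : Set ℤ) (hWpos : W ⊆ {n : ℤ | 0 < n}) (hWfin : W.Finite)
    (hWcard : W.ncard = s / 2) :
    ∃ A : Set ℤ, A.Infinite ∧ A ⊆ {n : ℤ | 0 < n} ∧
      AddSubgroup.closure A = ⊤ ∧
      {x : ℤ | addWordLength A x = r} = W ∪ (-W) ∧
      (∀ r' : ℕ, r < r' → {x : ℤ | addWordLength A x = r'} = ∅) ∧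
      Nat.card {x : ℤ | addWordLength A x = r} = s := by
  obtain ⟨B, hB0, hWB⟩ : ∃ B : ℤ, 0 ≤ B ∧ ∀ w ∈ W, w ≤ B :=
    let ⟨B, hB⟩ := hWfin.bddAbove
    ⟨max B 0, le_max_right _ _, fun w hw => (hB hw).trans (le_max_left _ _)⟩
  obtain ⟨Q, hQ⟩ : ∃ Q : ℤ, B + r ^ 2 ≤ Q := ⟨_, le_rfl⟩
  have hQ2 : 2 ≤ Q := by nlinarith
  have hlevel : {x : ℤ | addWordLength (genSet W r Q) x = r} = W ∪ -W := by
    ext x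
    rw [Set.mem_ofPred_eq, addWordLength_genSet_eq_iff hr hB0 hQ hWpos hWB,
      mem_union_neg_iff_abs_mem hWpos]
  refine ⟨genSet W r Q, genSet_infinite hQ2, genSet_subset_pos (by omega), closure_genSet_eq_top,
    hlevel, fun r' hr' => Set.eq_empty_of_forall_notMem fun x hx => ?_, ?_⟩
  · have := addWordLength_genSet_le hr hB0 hQ hWpos hWB x
    rw [Set.mem_ofPred_eq] at hx
    omega
  · have hdisj : Disjoint W (-W) := Set.disjoint_left.2 fun x hx hx' => by
      have h1 : 0 < x := hWpos hx
      have h2 : 0 < -x := hWpos hx'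
      omega
    rw [hlevel, Nat.card_coe_set_eq, Set.ncard_union_eq hdisj hWfin hWfin.neg, Set.ncard_neg,
      hWcard]
    obtain ⟨c, rfl⟩ := hse
    omega

theorem stmt18 (r s : ℕ) (hr : 2 ≤ r) (hs : 0 < s) (hse : Even s)
    (W : Set ℤ) (hWpos : W ⊆ {n : ℤ | 0 < n}) (hWfin : W.Finite)
    (hWcard : W.ncard = s / 2) :
    ∃ A : Set ℤ, A.Infinite ∧ A ⊆ {n : ℤ | 0 < n} ∧
      AddSubgroup.closure A = ⊤ ∧
      {x : ℤ | addWordLength A x = r} = W ∪ (-W) ∧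
      (∀ r' : ℕ, r < r' → {x : ℤ | addWordLength A x = r'} = ∅) ∧
      Nat.card {x : ℤ | addWordLength A x = r} = s :=
  stmt18_general r s hr hse W hWpos hWfin hWcard
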